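/- arXiv:0811.0851 — 3 statements merged into one kernel-verified Lean document; each statement's English description precedes it below -/
import Mathlib

section
/- On the 6×6 square board, any solution that starts with a single vacancy at a non-corner square and ends with a single peg must use at least 15 moves, where a 'move' is a maximal sequence of consecutive jumps by the same peg; this follows because the 36 holes can be partitioned into 16 regions such that every jump except possibly the first jump of a move must both start and end in regions already 'opened' (a region is opened when a jump starts from it), and every region must be opened before it can be emptied. -/
abbrev Pos := Finset (ℤ × ℤ)

def mid (a c : ℤ × ℤ) : ℤ × ℤ := ((a.1 + c.1) / 2, (a.2 + c.2) / 2)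

def steps : Finset (ℤ × ℤ) := {(2, 0), (-2, 0), (0, 2), (0, -2)}

/-- The jump from `a` to `c` (over `mid a c`) is legal on board `Bd` in position `S`. -/
def LegalJump (Bd S : Pos) (a c : ℤ × ℤ) : Prop :=
  c - a ∈ steps ∧ a ∈ Bd ∧ mid a c ∈ Bd ∧ c ∈ Bd ∧ a ∈ S ∧ mid a c ∈ S ∧ c ∉ S

def doJump (S : Pos) (a c : ℤ × ℤ) : Pos := insert c ((S.erase a).erase (mid a c))

/-- `Plays Bd S js S'`: executing the list of jumps `js` (each legal) from `S` yields `S'`. -/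
inductive Plays (Bd : Pos) : Pos → List ((ℤ × ℤ) × (ℤ × ℤ)) → Pos → Prop
  | nil (S : Pos) : Plays Bd S [] S
  | cons {S S' : Pos} {js : List ((ℤ × ℤ) × (ℤ × ℤ))} {a c : ℤ × ℤ} :
      LegalJump Bd S a c → Plays Bd (doJump S a c) js S' → Plays Bd S ((a, c) :: js) S'

/-- A move: a nonempty chain of jumps by one peg (each jump starts where the previous landed). -/
def IsChainMove (mv : List ((ℤ × ℤ) × (ℤ × ℤ))) : Prop :=
  mv ≠ [] ∧ List.Chain' (fun j1 j2 => j2.1 = j1.2) mv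

noncomputable def board6 : Pos := (Finset.Icc (0 : ℤ) 5) ×ˢ (Finset.Icc (0 : ℤ) 5)

/-!
Label the cell `(x, y)` by `((x + 1) / 2, (y + 1) / 2)`. On the 6×6 board the label classes are
sixteen Merson regions (four corner cells, eight edge dominoes, four interior 2×2 blocks): the
jumped-over cell of any jump shares its label with the start or the landing cell. So a jump can
only remove a peg from a full region by starting inside it, and a continuation jump never does,
since it starts on the cell where the previous jump landed, which was empty before. A move that
does not start in a full region `R` keeps it full and lands outside it, so afterwards `R` is a
proper subset of the position, which is impossible for the final single peg. Hence each of the at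
least fifteen regions avoiding the initial vacancy is opened by the first jump of some move, and
distinct regions need distinct moves.
-/

def IsMersonRegion (Bd R : Pos) : Prop :=
  ∀ a c, c - a ∈ steps → a ∈ Bd → c ∈ Bd → mid a c ∈ R → a ∈ R ∨ c ∈ R

theorem Plays.of_append {Bd S S'' : Pos} {l₁ l₂ : List ((ℤ × ℤ) × (ℤ × ℤ))}
    (h : Plays Bd S (l₁ ++ l₂) S'') : ∃ S', Plays Bd S l₁ S' ∧ Plays Bd S' l₂ S'' := by
  induction l₁ generalizing S with
  | nil => exact ⟨S, .nil S, h⟩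
  | cons j l₁ ih =>
    obtain ⟨a, c⟩ := j
    cases h with
    | cons hj hrest =>
      obtain ⟨S', h₁, h₂⟩ := ih hrest
      exact ⟨S', .cons hj h₁, h₂⟩

namespace IsMersonRegion

variable {Bd R : Pos}

theorem subset_doJump (hR : IsMersonRegion Bd R) {S : Pos} {a c : ℤ × ℤ}
    (hj : LegalJump Bd S a c) (hRS : R ⊆ S) (ha : a ∉ R) : R ⊆ doJump S a c := by
  obtain ⟨hstep, haB, -, hcB, -, -, hcS⟩ := hj
  intro x hx
  have hmid : mid a c ∉ R := fun hm =>
    (hR a c hstep haB hcB hm).elim ha fun hc => hcS (hRS hc)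
  exact Finset.mem_insert_of_mem <|
    Finset.mem_erase.2 ⟨fun h => hmid (h ▸ hx), Finset.mem_erase.2 ⟨fun h => ha (h ▸ hx), hRS hx⟩⟩

theorem ssubset_of_plays_chain (hR : IsMersonRegion Bd R)
    {mv : List ((ℤ × ℤ) × (ℤ × ℤ))} {S S' : Pos} {a c : ℤ × ℤ}
    (hch : List.IsChain (fun j₁ j₂ => j₂.1 = j₁.2) ((a, c) :: mv))
    (hp : Plays Bd S ((a, c) :: mv) S') (hRS : R ⊆ S) (ha : a ∉ R) : R ⊂ S' := by
  induction mv generalizing S a c with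
  | nil =>
    cases hp with
    | cons hj hrest =>
      cases hrest
      exact (Finset.ssubset_iff_of_subset (hR.subset_doJump hj hRS ha)).2
        ⟨c, Finset.mem_insert_self _ _, fun hc => hj.2.2.2.2.2.2 (hRS hc)⟩
  | cons j mv ih =>
    obtain ⟨a', c'⟩ := j
    obtain ⟨hc, hchain⟩ := List.isChain_cons_cons.1 hch
    obtain rfl : a' = c := hc
    cases hp with
    | cons hj hrest =>
      exact ih hchain hrest (hR.subset_doJump hj hRS ha) fun hc => hj.2.2.2.2.2.2 (hRS hc)

theorem eq_or_ssubset_of_plays_moves (hR : IsMersonRegion Bd R)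
    {moves : List (List ((ℤ × ℤ) × (ℤ × ℤ)))} {S S' : Pos}
    (hch : ∀ mv ∈ moves, IsChainMove mv) (hp : Plays Bd S moves.flatten S')
    (hopen : ∀ mv ∈ moves, ∀ j ∈ mv.head?, j.1 ∉ R) (hRS : R ⊆ S) : S' = S ∨ R ⊂ S' := by
  induction moves generalizing S with
  | nil => cases hp; exact .inl rfl
  | cons mv moves ih =>
    obtain ⟨S₁, hmv, hrest⟩ := Plays.of_append hp
    obtain ⟨hne, hchain⟩ := hch mv List.mem_cons_self
    obtain ⟨⟨a, c⟩, mv, rfl⟩ := List.exists_cons_of_ne_nil hne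
    have hR₁ := hR.ssubset_of_plays_chain hchain hmv hRS (hopen _ List.mem_cons_self _ rfl)
    refine .inr ?_
    rcases ih (fun m hm => hch m (List.mem_cons_of_mem _ hm)) hrest
      (fun m hm => hopen m (List.mem_cons_of_mem _ hm)) hR₁.subset with rfl | h
    exacts [hR₁, h]

theorem exists_move_opening (hR : IsMersonRegion Bd R) (hne : R.Nonempty)
    {moves : List (List ((ℤ × ℤ) × (ℤ × ℤ)))} {S : Pos} {w : ℤ × ℤ} (hRS : R ⊆ S) (hS : S ≠ {w})
    (hch : ∀ mv ∈ moves, IsChainMove mv) (hp : Plays Bd S moves.flatten {w}) :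
    ∃ mv ∈ moves, ∃ j ∈ mv.head?, j.1 ∈ R := by
  by_contra! hopen
  rcases hR.eq_or_ssubset_of_plays_moves hch hp hopen hRS with h | h
  · exact hS h.symm
  · exact hne.ne_empty (Finset.ssubset_singleton_iff.1 h)

end IsMersonRegion

def mersonLabel (p : ℤ × ℤ) : ℤ × ℤ := ((p.1 + 1) / 2, (p.2 + 1) / 2)

theorem mersonLabel_mid {a c : ℤ × ℤ} (h : c - a ∈ steps) :
    mersonLabel (mid a c) = mersonLabel a ∨ mersonLabel (mid a c) = mersonLabel c := by
  obtain ⟨a₁, a₂⟩ := a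
  obtain ⟨c₁, c₂⟩ := c
  simp only [steps, Finset.mem_insert, Finset.mem_singleton, Prod.ext_iff, Prod.fst_sub,
    Prod.snd_sub] at h
  simp only [mersonLabel, mid, Prod.ext_iff]
  omega

theorem isMersonRegion_filter_mersonLabel (Bd : Pos) (r : ℤ × ℤ) :
    IsMersonRegion Bd (Bd.filter (mersonLabel · = r)) := by
  intro a c hstep ha hc hm
  simp only [Finset.mem_filter] at hm ⊢
  rcases mersonLabel_mid hstep with h | h
  · exact .inl ⟨ha, h ▸ hm.2⟩
  · exact .inr ⟨hc, h ▸ hm.2⟩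

theorem card_image_mersonLabel_board6 : (board6.image mersonLabel).card = 16 := by decide

theorem card_board6 : board6.card = 36 := by decide

theorem sixBySix_noncorner_fifteen_moves_general (v : ℤ × ℤ)
    (w : ℤ × ℤ)
    (moves : List (List ((ℤ × ℤ) × (ℤ × ℤ))))
    (hch : ∀ mv ∈ moves, IsChainMove mv)
    (hp : Plays board6 (board6.erase v) moves.flatten {w}) :
    15 ≤ moves.length := by
  have hS : board6.erase v ≠ {w} := fun h => by
    have := h ▸ Finset.pred_card_le_card_erase (s := board6) (a := v)
    simp [card_board6] at this
  have hcover : (board6.image mersonLabel).erase (mersonLabel v) ⊆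
      ((moves.filterMap List.head?).map (mersonLabel ∘ Prod.fst)).toFinset := by
    intro r hr
    obtain ⟨hrv, hr⟩ := Finset.mem_erase.1 hr
    obtain ⟨p, hpB, rfl⟩ := Finset.mem_image.1 hr
    have hsub : board6.filter (mersonLabel · = mersonLabel p) ⊆ board6.erase v := fun x hx => by
      obtain ⟨hx, hxp⟩ := Finset.mem_filter.1 hx
      exact Finset.mem_erase.2 ⟨by rintro rfl; exact hrv hxp.symm, hx⟩
    obtain ⟨mv, hmv, j, hj, hjR⟩ := (isMersonRegion_filter_mersonLabel board6 _).exists_move_opening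
      ⟨p, Finset.mem_filter.2 ⟨hpB, rfl⟩⟩ hsub hS hch hp
    simp only [List.mem_toFinset, List.mem_map, List.mem_filterMap, Function.comp_apply]
    exact ⟨j, ⟨mv, hmv, hj⟩, (Finset.mem_filter.1 hjR).2⟩
  calc 15 = (board6.image mersonLabel).card - 1 := by rw [card_image_mersonLabel_board6]
    _ ≤ ((board6.image mersonLabel).erase (mersonLabel v)).card := Finset.pred_card_le_card_erase
    _ ≤ _ := Finset.card_le_card hcover
    _ ≤ _ := List.toFinset_card_le _
    _ ≤ moves.length := by simpa using List.length_filterMap_le _ _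

/-- On the 6×6 board, any solution from a single non-corner vacancy to a single peg
uses at least 15 moves (moves = chains of jumps by one peg). -/
theorem sixBySix_noncorner_fifteen_moves (v : ℤ × ℤ) (hv : v ∈ board6)
    (hnc : v ∉ ({((0 : ℤ), (0 : ℤ)), (0, 5), (5, 0), (5, 5)} : Finset (ℤ × ℤ)))
    (w : ℤ × ℤ)
    (moves : List (List ((ℤ × ℤ) × (ℤ × ℤ))))
    (hch : ∀ mv ∈ moves, IsChainMove mv)
    (hp : Plays board6 (board6.erase v) moves.flatten {w}) :
    15 ≤ moves.length :=
  sixBySix_noncorner_fifteen_moves_general v w moves hch hp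
end

section
/- Conway's golden-ratio resource count is non-increasing under peg-solitaire jumps toward a target: let σ = (√5 − 1)/2, satisfying σ² + σ = 1, and assign to the hole at position p the weight σ^{d(p)} where d(p) is the distance from p to a fixed target hole t in the taxicab metric along the relevant axis direction; then for any jump directed toward t along that axis (from distance k+2 and k+1 to distance k), the total weight is unchanged (σ^{k+2} + σ^{k+1} = σ^k), and for any other jump the total weight strictly decreases or stays equal; in particular the total weight of pegs never increases during play when weights are σ^{|x−x_t|+|y−y_t|}. -/
def orthoDirs : Finset (ℤ × ℤ) := {(1, 0), (-1, 0), (0, 1), (0, -1)}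

/-- A single solitaire jump on the whole integer lattice. -/
def IsJump (S S' : Pos) : Prop :=
  ∃ p d : ℤ × ℤ, d ∈ orthoDirs ∧ p ∈ S ∧ p + d ∈ S ∧ p + d + d ∉ S ∧
    S' = insert (p + d + d) ((S.erase p).erase (p + d))

noncomputable def sigma' : ℝ := (Real.sqrt 5 - 1) / 2

/-- Golden-ratio weight of the hole `p` relative to the target `t`. -/
noncomputable def w (t p : ℤ × ℤ) : ℝ :=
  sigma' ^ ((p.1 - t.1).natAbs + (p.2 - t.2).natAbs)

/-- Total golden-ratio weight of a position. -/
noncomputable def W (t : ℤ × ℤ) (S : Pos) : ℝ := ∑ p ∈ S, w t p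

/-!
The weight factors as `σ^|x| * σ^|y|`, so a jump only changes one factor, and it suffices to
compare `σ^|m + 2|` with `σ^|m| + σ^|m + 1|` on a line. Toward the target (`m ≤ -2`) these are
equal by `σ² + σ = 1`; otherwise `|m + 2| ≥ |m|` and `σ ≤ 1` already give the inequality.
-/

theorem Finset.sum_insert_erase_erase {α M : Type*} [DecidableEq α] [AddCommGroup M]
    {f : α → M} {S : Finset α} {a b c : α} (ha : a ∈ S) (hb : b ∈ S) (hab : a ≠ b) (hc : c ∉ S) :
    ∑ x ∈ insert c ((S.erase a).erase b), f x = ∑ x ∈ S, f x - f a - f b + f c := by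
  have hc' : c ∉ (S.erase a).erase b := fun h =>
    hc (Finset.mem_of_mem_erase (Finset.mem_of_mem_erase h))
  rw [Finset.sum_insert hc', Finset.sum_erase_eq_sub (Finset.mem_erase.mpr ⟨hab.symm, hb⟩),
    Finset.sum_erase_eq_sub ha, add_comm]

lemma sigma'_pos : 0 < sigma' := by
  have : 1 < Real.sqrt 5 := by
    rw [Real.lt_sqrt zero_le_one]
    norm_num
  unfold sigma'
  linarith

lemma sigma'_sq_add_self : sigma' ^ 2 + sigma' = 1 := by
  unfold sigma'
  nlinarith [Real.sq_sqrt (show (0 : ℝ) ≤ 5 by norm_num)]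

lemma sigma'_pow_add_two_add_pow_add_one (k : ℕ) :
    sigma' ^ (k + 2) + sigma' ^ (k + 1) = sigma' ^ k := by
  rw [← mul_one (sigma' ^ k), ← sigma'_sq_add_self]
  ring

lemma sigma'_pow_natAbs_add_two_le (m : ℤ) :
    sigma' ^ (m + 2).natAbs ≤ sigma' ^ m.natAbs + sigma' ^ (m + 1).natAbs := by
  have hσ := sigma'_pos
  rcases le_or_gt 0 m with hm | hm
  · rw [show (m + 2).natAbs = m.natAbs + 2 by omega, show (m + 1).natAbs = m.natAbs + 1 by omega]
    linarith [sigma'_pow_add_two_add_pow_add_one m.natAbs, pow_pos hσ (m.natAbs + 1)]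
  rcases le_or_gt m (-2) with hm' | hm'
  · rw [show m.natAbs = (m + 2).natAbs + 2 by omega,
      show (m + 1).natAbs = (m + 2).natAbs + 1 by omega]
    exact (sigma'_pow_add_two_add_pow_add_one _).ge
  · obtain rfl : m = -1 := by omega
    norm_num

lemma sigma'_pow_natAbs_add_add_le {e : ℤ} (he : e.natAbs = 1) (m : ℤ) :
    sigma' ^ (m + e + e).natAbs ≤ sigma' ^ m.natAbs + sigma' ^ (m + e).natAbs := by
  obtain rfl | rfl : e = 1 ∨ e = -1 := by omega
  · simpa only [add_assoc, one_add_one_eq_two] using sigma'_pow_natAbs_add_two_le m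
  · have := sigma'_pow_natAbs_add_two_le (-m)
    rwa [← Int.natAbs_neg (m + _ + _), ← Int.natAbs_neg (m + _), ← Int.natAbs_neg m,
      show -(m + -1 + -1) = -m + 2 by ring, show -(m + -1) = -m + 1 by ring]

lemma ne_zero_of_mem_orthoDirs {d : ℤ × ℤ} (hd : d ∈ orthoDirs) : d ≠ 0 := by
  fin_cases hd <;> decide

lemma natAbs_of_mem_orthoDirs {d : ℤ × ℤ} (hd : d ∈ orthoDirs) :
    (d.1.natAbs = 1 ∧ d.2 = 0) ∨ (d.1 = 0 ∧ d.2.natAbs = 1) := by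
  fin_cases hd <;> simp

lemma w_eq_mul (t p : ℤ × ℤ) :
    w t p = sigma' ^ (p.1 - t.1).natAbs * sigma' ^ (p.2 - t.2).natAbs :=
  pow_add _ _ _

lemma w_add_add_le (t p : ℤ × ℤ) {d : ℤ × ℤ} (hd : d ∈ orthoDirs) :
    w t (p + d + d) ≤ w t p + w t (p + d) := by
  have h0 (n : ℕ) : 0 ≤ sigma' ^ n := (pow_pos sigma'_pos n).le
  simp only [w_eq_mul, Prod.fst_add, Prod.snd_add]
  rcases natAbs_of_mem_orthoDirs hd with ⟨he, h2⟩ | ⟨h1, he⟩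
  · rw [h2, add_zero, add_zero, show p.1 + d.1 + d.1 - t.1 = p.1 - t.1 + d.1 + d.1 by ring,
      show p.1 + d.1 - t.1 = p.1 - t.1 + d.1 by ring, ← add_mul]
    exact mul_le_mul_of_nonneg_right (sigma'_pow_natAbs_add_add_le he _) (h0 _)
  · rw [h1, add_zero, add_zero, show p.2 + d.2 + d.2 - t.2 = p.2 - t.2 + d.2 + d.2 by ring,
      show p.2 + d.2 - t.2 = p.2 - t.2 + d.2 by ring, ← mul_add]
    exact mul_le_mul_of_nonneg_left (sigma'_pow_natAbs_add_add_le he _) (h0 _)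

/-- Conway's golden-ratio resource count never increases under a jump. -/
theorem golden_ratio_count_nonincreasing :
    sigma' ^ 2 + sigma' = 1 ∧
    (∀ k : ℕ, sigma' ^ (k + 2) + sigma' ^ (k + 1) = sigma' ^ k) ∧
    (∀ (t : ℤ × ℤ) (S S' : Pos), IsJump S S' → W t S' ≤ W t S) := by
  refine ⟨sigma'_sq_add_self, sigma'_pow_add_two_add_pow_add_one, ?_⟩
  rintro t S S' ⟨p, d, hd, hp, hpd, hpdd, rfl⟩
  have hpd_ne : p ≠ p + d := by
    simpa [eq_comm] using ne_zero_of_mem_orthoDirs hd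
  rw [W, W, Finset.sum_insert_erase_erase hp hpd hpd_ne hpdd]
  linarith [w_add_add_le t p hd]
end

section
/- The 33-hole English board and the 37-hole French board satisfy: the full board has trivial parity invariants on the English board (it is null-class), but the French board is not null-class at every hole; specifically, on the French board the central-vacancy complement problem (vacate d4, finish at d4) is impossible because the position 'full board minus d4' and 'single peg at d4' lie in different classes under the jump-invariant parity labelings. -/
/-- A single solitaire jump restricted to a board `Bd`. -/
def IsJumpOn (Bd S S' : Pos) : Prop :=
  ∃ p d : ℤ × ℤ, d ∈ orthoDirs ∧ p ∈ Bd ∧ p + d ∈ Bd ∧ p + d + d ∈ Bd ∧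
    p ∈ S ∧ p + d ∈ S ∧ p + d + d ∉ S ∧
    S' = insert (p + d + d) ((S.erase p).erase (p + d))

/-- Number of pegs whose coordinate sum is `k` modulo 3. -/
def Acount (k : ℤ) (S : Pos) : ℕ := (S.filter (fun q => (q.1 + q.2) % 3 = k)).card

/-- Number of pegs whose coordinate difference is `k` modulo 3. -/
def Bcount (k : ℤ) (S : Pos) : ℕ := (S.filter (fun q => (q.1 - q.2) % 3 = k)).card

noncomputable def englishBoard : Pos :=
  ((Finset.Icc (0 : ℤ) 6) ×ˢ (Finset.Icc (0 : ℤ) 6)).filter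
    (fun p => (2 ≤ p.1 ∧ p.1 ≤ 4) ∨ (2 ≤ p.2 ∧ p.2 ≤ 4))

noncomputable def frenchBoard : Pos :=
  ((Finset.Icc (0 : ℤ) 6) ×ˢ (Finset.Icc (0 : ℤ) 6)).filter (fun p =>
    ((p.2 = 0 ∨ p.2 = 6) ∧ 2 ≤ p.1 ∧ p.1 ≤ 4) ∨
    ((p.2 = 1 ∨ p.2 = 5) ∧ 1 ≤ p.1 ∧ p.1 ≤ 5) ∨
    (2 ≤ p.2 ∧ p.2 ≤ 4))

/-!
Colour the lattice by `g q mod 3` for an additive `g : ℤ × ℤ → ℤ` taking the values `±1` on the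
four unit steps (e.g. `x + y` or `x - y`). The three holes `p, p + d, p + 2d` of a jump then carry
the three distinct colours, so a jump changes every colour count by `±1`: each count flips parity,
and the parity of the sum of any two counts is invariant. On the French board with d4 vacated
every colour class holds 12 pegs, whereas a lone peg on d4 leaves an odd count in one class.
-/

open Finset

def labelCount (g : ℤ × ℤ →+ ℤ) (k : ℤ) (S : Pos) : ℕ := #{q ∈ S | g q % 3 = k}

lemma labelCount_insert (g : ℤ × ℤ →+ ℤ) (k : ℤ) {x : ℤ × ℤ} {T : Pos} (hx : x ∉ T) :
    labelCount g k (insert x T) = labelCount g k T + if g x % 3 = k then 1 else 0 := by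
  unfold labelCount
  rw [filter_insert]
  split_ifs
  · exact card_insert_of_notMem fun h => hx (mem_filter.mp h).1
  · rfl

lemma IsJumpOn.isJump {Bd S S' : Pos} (h : IsJumpOn Bd S S') : IsJump S S' := by
  obtain ⟨p, d, hd, -, -, -, h⟩ := h
  exact ⟨p, d, hd, h⟩

section Labelling

variable (g : ℤ × ℤ →+ ℤ) (hg : ∀ d ∈ orthoDirs, g d = 1 ∨ g d = -1)
include hg

lemma labelCount_add_odd_of_isJump {S S' : Pos} (h : IsJump S S') {k : ℤ} (hk0 : 0 ≤ k)
    (hk3 : k < 3) : (labelCount g k S' + labelCount g k S) % 2 = 1 := by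
  obtain ⟨p, d, hd, hp, hpd, hpdd, rfl⟩ := h
  have hgd := hg d hd
  have hpd_ne : p + d ≠ p := fun h => by
    have := congrArg g h
    rw [map_add] at this
    omega
  set E := (S.erase p).erase (p + d)
  have hpE : p ∉ E := fun h => (mem_erase.mp (mem_erase.mp h).2).1 rfl
  have hpdE : p + d ∉ E := fun h => (mem_erase.mp h).1 rfl
  have hpddE : p + d + d ∉ E := fun h => hpdd (mem_of_mem_erase (mem_of_mem_erase h))
  have hS : S = insert p (insert (p + d) E) := by
    rw [insert_erase (mem_erase.mpr ⟨hpd_ne, hpd⟩), insert_erase hp]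
  rw [hS, labelCount_insert g k hpddE, labelCount_insert g k (by simp [hpE, Ne.symm hpd_ne]),
    labelCount_insert g k hpdE, map_add, map_add]
  -- `g p`, `g p + g d`, `g p + 2 g d` run through all residues mod 3 exactly once
  rcases hgd with hgd | hgd <;> rw [hgd] <;> split_ifs <;> omega

lemma labelCount_pair_parity_of_isJump {S S' : Pos} (h : IsJump S S') {i j : ℤ}
    (hi : i ∈ ({0, 1, 2} : Finset ℤ)) (hj : j ∈ ({0, 1, 2} : Finset ℤ)) :
    (labelCount g i S' + labelCount g j S') % 2 = (labelCount g i S + labelCount g j S) % 2 := by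
  simp only [mem_insert, mem_singleton] at hi hj
  have hi' := labelCount_add_odd_of_isJump g hg h (k := i) (by omega) (by omega)
  have hj' := labelCount_add_odd_of_isJump g hg h (k := j) (by omega) (by omega)
  omega

end Labelling

lemma apply_last_eq_apply_zero_of_chain {α β : Type*} {r : α → α → Prop} (φ : α → β)
    (hφ : ∀ a b, r a b → φ b = φ a) {m : ℕ} (f : Fin (m + 1) → α)
    (hf : ∀ i : Fin m, r (f i.castSucc) (f i.succ)) : φ (f (Fin.last m)) = φ (f 0) := by
  induction Fin.last m using Fin.induction with
  | zero => rfl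
  | succ i ih => exact (hφ _ _ (hf i)).trans ih

def sumLabel : ℤ × ℤ →+ ℤ := (AddMonoidHom.id ℤ).coprod (AddMonoidHom.id ℤ)

lemma sumLabel_orthoDirs : ∀ d ∈ orthoDirs, sumLabel d = 1 ∨ sumLabel d = -1 := by
  simp [orthoDirs, sumLabel]

/-- The English board is null-class (all parity invariants of the full board vanish),
but on the French board the invariants of 'full minus the center d4' differ from those
of 'single peg at d4'; hence the central-vacancy complement problem on the French board
has no solution. -/
theorem english_null_french_center_impossible :
    (∀ i ∈ ({0, 1, 2} : Finset ℤ), ∀ j ∈ ({0, 1, 2} : Finset ℤ), i ≠ j →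
      (Acount i englishBoard + Acount j englishBoard) % 2 = 0 ∧
      (Bcount i englishBoard + Bcount j englishBoard) % 2 = 0) ∧
    (∃ i ∈ ({0, 1, 2} : Finset ℤ), ∃ j ∈ ({0, 1, 2} : Finset ℤ), i ≠ j ∧
      ((Acount i (frenchBoard.erase ((3 : ℤ), (3 : ℤ))) +
          Acount j (frenchBoard.erase ((3 : ℤ), (3 : ℤ)))) % 2 ≠
        (Acount i ({((3 : ℤ), (3 : ℤ))} : Pos) +
          Acount j ({((3 : ℤ), (3 : ℤ))} : Pos)) % 2 ∨
       (Bcount i (frenchBoard.erase ((3 : ℤ), (3 : ℤ))) +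
          Bcount j (frenchBoard.erase ((3 : ℤ), (3 : ℤ)))) % 2 ≠
        (Bcount i ({((3 : ℤ), (3 : ℤ))} : Pos) +
          Bcount j ({((3 : ℤ), (3 : ℤ))} : Pos)) % 2)) ∧
    ¬ ∃ (m : ℕ) (f : Fin (m + 1) → Pos),
      (∀ i : Fin m, IsJumpOn frenchBoard (f i.castSucc) (f i.succ)) ∧
      f 0 = frenchBoard.erase ((3 : ℤ), (3 : ℤ)) ∧
      f (Fin.last m) = ({((3 : ℤ), (3 : ℤ))} : Pos) := by
  refine ⟨by decide, by decide, ?_⟩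
  rintro ⟨m, f, hf, h0, hlast⟩
  have hinv := apply_last_eq_apply_zero_of_chain
    (fun S => (labelCount sumLabel 0 S + labelCount sumLabel 1 S) % 2)
    (fun _ _ h => labelCount_pair_parity_of_isJump sumLabel sumLabel_orthoDirs h.isJump
      (by simp) (by simp)) f hf
  rw [h0, hlast] at hinv
  exact absurd hinv (by decide)
end
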